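/- For full-rank V ∈ R^{r×N} with r ≤ N and v = vec(V), the kernel of I_N ⊗ (V V^T) − (vv^T)^Γ equals {vec(S V) : S ∈ R^{r×r} symmetric}; in particular its dimension is r(r+1)/2. -/

import Mathlib

open Matrix

/-- The partial transpose: each `r × r` block is transposed. -/
def partialTranspose {N r : ℕ} (M : Matrix (Fin N × Fin r) (Fin N × Fin r) ℝ) :
    Matrix (Fin N × Fin r) (Fin N × Fin r) ℝ :=
  Matrix.of fun p q => M (p.1, q.2) (q.1, p.2)

/-!
Write `x = vec X` and `G = V Vᵀ`. The operator acts by `vec X ↦ vec (G X - V Xᵀ V)`, so its kernel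
consists of the `X` with `G X = V Xᵀ V`. Full rank makes `G` invertible, and then these are exactly
the `X = S V` with `S` symmetric: take `S = G⁻¹ V Xᵀ`, whose symmetry is the identity
`G (X Vᵀ) = (V Xᵀ) G` obtained by multiplying `G X = V Xᵀ V` by `Vᵀ` on the right. As `S ↦ S V` is
injective, the kernel is isomorphic to the space of symmetric matrices, i.e. to `Sym2 (Fin r) → ℝ`.
-/

namespace Matrix

variable {m n R K : Type*}

theorem isUnit_of_rank_eq_card [Fintype m] [Field K] [DecidableEq m] {A : Matrix m m K}
    (h : A.rank = Fintype.card m) : IsUnit A := by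
  rw [← mulVec_surjective_iff_isUnit]
  have : LinearMap.range A.mulVecLin = ⊤ :=
    Submodule.eq_top_of_finrank_eq (by rwa [Module.finrank_fintype_fun_eq_card])
  exact LinearMap.range_eq_top.1 this

theorem mul_transpose_mul_eq_iff_exists_isSymm [Fintype m] [Fintype n] [CommRing R]
    [DecidableEq m] {V : Matrix m n R} (hG : IsUnit (V * Vᵀ).det) (X : Matrix m n R) :
    V * Vᵀ * X = V * Xᵀ * V ↔ ∃ S : Matrix m m R, S.IsSymm ∧ X = S * V := by
  generalize hGdef : V * Vᵀ = G at hG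
  constructor
  · intro h
    have hcomm : G * (X * Vᵀ) = V * Xᵀ * G := by
      rw [← Matrix.mul_assoc, h, Matrix.mul_assoc (V * Xᵀ), hGdef]
    have hGinv : G⁻¹ᵀ = G⁻¹ := by
      rw [transpose_nonsing_inv, ← hGdef, transpose_mul, transpose_transpose]
    refine ⟨G⁻¹ * (V * Xᵀ), ?_, ?_⟩
    · calc (G⁻¹ * (V * Xᵀ))ᵀ = X * Vᵀ * G⁻¹ := by
            rw [transpose_mul, hGinv, transpose_mul, transpose_transpose]
        _ = G⁻¹ * (G * (X * Vᵀ)) * G⁻¹ := by rw [nonsing_inv_mul_cancel_left _ _ hG]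
        _ = G⁻¹ * (V * Xᵀ) := by
            rw [hcomm, Matrix.mul_assoc, mul_nonsing_inv_cancel_right _ _ hG]
    · rw [Matrix.mul_assoc, ← h, nonsing_inv_mul_cancel_left _ _ hG]
  · rintro ⟨S, hS, rfl⟩
    rw [transpose_mul, hS.eq, ← hGdef]
    simp only [Matrix.mul_assoc]

section Semiring

variable [Semiring R]

def ofSym2 : (Sym2 m → R) →ₗ[R] Matrix m m R where
  toFun f := of fun i j => f s(i, j)
  map_add' _ _ := rfl
  map_smul' _ _ := rfl

theorem isSymm_ofSym2 (f : Sym2 m → R) : (ofSym2 f).IsSymm :=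
  IsSymm.ext fun _ _ => congrArg f Sym2.eq_swap

theorem ofSym2_injective : Function.Injective (ofSym2 : (Sym2 m → R) → Matrix m m R) :=
  fun _ _ h => funext <| Sym2.ind fun i j => congrFun (congrFun h i) j

theorem exists_ofSym2_eq {S : Matrix m m R} (hS : S.IsSymm) : ∃ f, ofSym2 f = S :=
  ⟨Sym2.lift ⟨S, fun i j => hS.apply j i⟩, rfl⟩

end Semiring

variable [CommRing R] [Fintype m]

def vecOfSym2Mul (V : Matrix m n R) : (Sym2 m → R) →ₗ[R] n × m → R where
  toFun f := vec (ofSym2 f * V)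
  map_add' f g := by rw [map_add, Matrix.add_mul, vec_add]
  map_smul' c f := by rw [map_smul, Matrix.smul_mul, vec_smul, RingHom.id_apply]

theorem mem_range_vecOfSym2Mul {V : Matrix m n R} {x : n × m → R} :
    x ∈ LinearMap.range (vecOfSym2Mul V) ↔ ∃ S : Matrix m m R, S.IsSymm ∧ x = vec (S * V) := by
  constructor
  · rintro ⟨f, rfl⟩
    exact ⟨ofSym2 f, isSymm_ofSym2 f, rfl⟩
  · rintro ⟨S, hS, rfl⟩
    obtain ⟨f, rfl⟩ := exists_ofSym2_eq hS
    exact ⟨f, rfl⟩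

theorem vecOfSym2Mul_injective [Fintype n] [DecidableEq m] {V : Matrix m n R}
    (hG : IsUnit (V * Vᵀ).det) :
    Function.Injective (vecOfSym2Mul V) := by
  intro f g h
  have hfg : ofSym2 f * V = ofSym2 g * V := vec_inj.1 h
  apply ofSym2_injective
  calc ofSym2 f = ofSym2 f * V * Vᵀ * (V * Vᵀ)⁻¹ := by
        rw [Matrix.mul_assoc _ V, mul_nonsing_inv_cancel_right _ _ hG]
    _ = ofSym2 g := by rw [hfg, Matrix.mul_assoc _ V, mul_nonsing_inv_cancel_right _ _ hG]

end Matrix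

theorem partialTranspose_vecMulVec_mulVec_vec {N r : ℕ} (V X : Matrix (Fin r) (Fin N) ℝ) :
    partialTranspose (vecMulVec (vec V) (vec V)) *ᵥ vec X = vec (V * Xᵀ * V) := by
  ext ⟨n, i⟩
  simp only [partialTranspose, mulVec, dotProduct, of_apply, vecMulVec_apply, vec, mul_apply,
    transpose_apply, Finset.sum_mul, ← Finset.univ_product_univ, Finset.sum_product]
  rw [Finset.sum_comm]
  refine Finset.sum_congr rfl fun j _ => Finset.sum_congr rfl fun k _ => ?_
  ring

theorem kernel_eq_sym_subspace_general (r N : ℕ)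
    (V : Matrix (Fin r) (Fin N) ℝ) (hrank : V.rank = r)
    (v : Fin N × Fin r → ℝ) (hv : v = fun p => V p.2 p.1)
    (A : Matrix (Fin N × Fin r) (Fin N × Fin r) ℝ)
    (hA : A = Matrix.kroneckerMap (· * ·) (1 : Matrix (Fin N) (Fin N) ℝ) (V * Vᵀ)
        - partialTranspose (Matrix.vecMulVec v v)) :
    {x : Fin N × Fin r → ℝ | A.mulVec x = 0}
        = {x | ∃ S : Matrix (Fin r) (Fin r) ℝ, S.IsSymm ∧ x = fun p => (S * V) p.2 p.1}
      ∧ Module.finrank ℝ (LinearMap.ker A.mulVecLin) = r * (r + 1) / 2 := by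
  have hG : IsUnit (V * Vᵀ).det :=
    (isUnit_iff_isUnit_det _).1 (isUnit_of_rank_eq_card (by simp [hrank]))
  have hker : ∀ x, A *ᵥ x = 0 ↔ x ∈ LinearMap.range (vecOfSym2Mul V) := by
    intro x
    obtain ⟨X, rfl⟩ := vec_bijective.2 x
    rw [hA, show v = vec V from hv, sub_mulVec, kronecker_mulVec_vec,
      partialTranspose_vecMulVec_mulVec_vec, transpose_one, Matrix.mul_one, ← vec_sub,
      vec_eq_zero_iff, sub_eq_zero, mul_transpose_mul_eq_iff_exists_isSymm hG,
      mem_range_vecOfSym2Mul]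
    simp only [vec_inj]
  refine ⟨Set.ext fun x => (hker x).trans mem_range_vecOfSym2Mul, ?_⟩
  rw [show LinearMap.ker A.mulVecLin = LinearMap.range (vecOfSym2Mul V) from Submodule.ext hker,
    LinearMap.finrank_range_of_inj (vecOfSym2Mul_injective hG), Module.finrank_fintype_fun_eq_card,
    Sym2.card, Fintype.card_fin, Nat.choose_two_right, Nat.add_sub_cancel, Nat.mul_comm]

/-- For full-rank `V ∈ ℝ^{r×N}` with `r ≤ N` and `v = vec(V)`, the kernel of
`I_N ⊗ (V Vᵀ) − (v vᵀ)^Γ` is `{vec(S V) : S symmetric}`, of dimension `r(r+1)/2`. -/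
theorem kernel_eq_sym_subspace (r N : ℕ) (hrN : r ≤ N)
    (V : Matrix (Fin r) (Fin N) ℝ) (hrank : V.rank = r)
    (v : Fin N × Fin r → ℝ) (hv : v = fun p => V p.2 p.1)
    (A : Matrix (Fin N × Fin r) (Fin N × Fin r) ℝ)
    (hA : A = Matrix.kroneckerMap (· * ·) (1 : Matrix (Fin N) (Fin N) ℝ) (V * Vᵀ)
        - partialTranspose (Matrix.vecMulVec v v)) :
    {x : Fin N × Fin r → ℝ | A.mulVec x = 0}
        = {x | ∃ S : Matrix (Fin r) (Fin r) ℝ, S.IsSymm ∧ x = fun p => (S * V) p.2 p.1}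
      ∧ Module.finrank ℝ (LinearMap.ker A.mulVecLin) = r * (r + 1) / 2 :=
  kernel_eq_sym_subspace_general r N V hrank v hv A hA
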